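/- Let L = Σ_{i+j=0}^{d} a_{ij} Dx^i Dy^j be a nonzero operator of order d in K[Dx,Dy]. Then L admits a Darboux transformation generated by M = Dy if and only if for all i, k ∈ {0,…,d} with a_{i0} ≠ 0 and a_{k0} ≠ 0 there exists F ∈ K with ∂y(F) = 0 and a_{i0} = F·a_{k0} (equivalently, ∂y(a_{i0}·a_{k0}^{-1}) = 0). -/
import Mathlib


/-- `d : K → K` is a derivation: additive and satisfying the Leibniz rule. -/
def IsDeriv {K : Type*} [Field K] (d : K → K) : Prop :=
  (∀ a b : K, d (a + b) = d a + d b) ∧ (∀ a b : K, d (a * b) = d a * b + a * d b)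

/-- A formal linear partial differential operator in `K[Dx,Dy]`:
the finitely supported family of its coefficients, where the value at
`(i, j)` is the coefficient of `Dx^i Dy^j`.  Two operators are equal iff
all their coefficients coincide. -/
abbrev LPDO (K : Type*) [Field K] : Type _ := (ℕ × ℕ) →₀ K

namespace LPDO

variable {K : Type*} [Field K]

/-- The operator `Dx`. -/
noncomputable def Dx : LPDO K := Finsupp.single (1, 0) 1

/-- The operator `Dy`. -/
noncomputable def Dy : LPDO K := Finsupp.single (0, 1) 1

/-- The operator of multiplication by `m ∈ K`. -/
noncomputable def ofK (m : K) : LPDO K := Finsupp.single (0, 0) m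

/-- Composition `A ∘ B` in `K[Dx,Dy]`, computed from the relations
`Dx ∘ b = b Dx + dx(b)`, `Dy ∘ b = b Dy + dy(b)`, `Dx ∘ Dy = Dy ∘ Dx`, via
`a Dx^i Dy^j ∘ b Dx^k Dy^l
  = Σ_{p≤i} Σ_{q≤j} a C(i,p) C(j,q) dx^{i-p}(dy^{j-q}(b)) Dx^{p+k} Dy^{q+l}`. -/
noncomputable def comp (dx dy : K → K) (A B : LPDO K) : LPDO K :=
  A.sum fun ij a =>
    B.sum fun kl b =>
      ∑ p ∈ Finset.range (ij.1 + 1), ∑ q ∈ Finset.range (ij.2 + 1),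
        Finsupp.single (p + kl.1, q + kl.2)
          (a * (ij.1.choose p : K) * (ij.2.choose q : K) * dx^[ij.1 - p] (dy^[ij.2 - q] b))

/-- The order of a (nonzero) operator: the largest `i + j` with `a_{ij} ≠ 0`. -/
def ord (A : LPDO K) : ℕ := A.support.sup fun ij => ij.1 + ij.2

/-- The degree-`d` part of the symbol: `Σ_{i+j=d} a_{ij} X^i Y^j ∈ K[X,Y]`,
where `X`, `Y` are the two variables of `MvPolynomial (Fin 2) K`. -/
noncomputable def psym (A : LPDO K) (d : ℕ) : MvPolynomial (Fin 2) K :=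
  ∑ i ∈ Finset.range (d + 1),
    MvPolynomial.monomial
      (Finsupp.single (0 : Fin 2) i + Finsupp.single (1 : Fin 2) (d - i)) (A (i, d - i))

/-- `L1` has the same principal symbol as `L`. -/
def SameSym (L1 L : LPDO K) : Prop :=
  ord L1 = ord L ∧ psym L1 (ord L) = psym L (ord L)

/-- `L` admits a Darboux transformation generated by `M`: there are `N`, `L1`,
with `L1` having the same principal symbol as `L`, such that `N ∘ L = L1 ∘ M`. -/
def AdmitsDarboux (dx dy : K → K) (L M : LPDO K) : Prop :=
  ∃ N L1 : LPDO K, SameSym L1 L ∧ comp dx dy N L = comp dx dy L1 M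

/-- The gauge transform `R^g = g⁻¹ ∘ R ∘ g`. -/
noncomputable def gauge (dx dy : K → K) (g : K) (R : LPDO K) : LPDO K :=
  comp dx dy (ofK g⁻¹) (comp dx dy R (ofK g))

/-- The action `L(f) = Σ a_{ij} ∂x^i ∂y^j (f)` of an operator on `K`. -/
noncomputable def apply (dx dy : K → K) (A : LPDO K) (f : K) : K :=
  A.sum fun ij a => a * dx^[ij.1] (dy^[ij.2] f)

end LPDO

namespace LPDOAux
open LPDO Finsupp Finset

variable {K : Type*} [Field K] {dx dy : K → K}

lemma deriv_zero {d : K → K} (h : IsDeriv d) : d 0 = 0 := by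
  have h0 := h.1 0 0
  rw [add_zero] at h0
  nth_rewrite 1 [← add_zero (d 0)] at h0
  exact (add_left_cancel h0).symm

lemma deriv_one {d : K → K} (h : IsDeriv d) : d 1 = 0 := by
  have h0 := h.2 1 1
  rw [mul_one, mul_one, one_mul] at h0
  nth_rewrite 1 [← add_zero (d 1)] at h0
  exact (add_left_cancel h0).symm

lemma iter_zero {d : K → K} (h : IsDeriv d) (n : ℕ) : d^[n] 0 = 0 := by
  induction n with
  | zero => rfl
  | succ n ih => rw [Function.iterate_succ_apply', ih, deriv_zero h]

lemma iter_one {d : K → K} (h : IsDeriv d) {n : ℕ} (hn : n ≠ 0) : d^[n] 1 = 0 := by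
  cases n with
  | zero => exact absurd rfl hn
  | succ n => rw [Function.iterate_succ_apply, deriv_one h, iter_zero h]

lemma comp_apply (A B : LPDO K) (m n : ℕ) :
    comp dx dy A B (m, n) =
      A.sum fun ij a => B.sum fun kl b =>
        ∑ p ∈ Finset.range (ij.1 + 1), ∑ q ∈ Finset.range (ij.2 + 1),
          (if ((p + kl.1 : ℕ), (q + kl.2 : ℕ)) = (m, n)
           then a * (ij.1.choose p : K) * (ij.2.choose q : K) * dx^[ij.1 - p] (dy^[ij.2 - q] b)
           else 0) := by
  rw [LPDO.comp, Finsupp.sum_apply]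
  refine Finsupp.sum_congr fun ij _ => ?_
  rw [Finsupp.sum_apply]
  refine Finsupp.sum_congr fun kl _ => ?_
  rw [Finset.sum_apply']
  refine Finset.sum_congr rfl fun p _ => ?_
  rw [Finset.sum_apply']
  refine Finset.sum_congr rfl fun q _ => ?_
  rw [Finsupp.single_apply]

lemma le_ord {A : LPDO K} {ij : ℕ × ℕ} (h : ij ∈ A.support) : ij.1 + ij.2 ≤ ord A := by
  rw [LPDO.ord]
  exact Finset.le_sup (f := fun ij : ℕ × ℕ => ij.1 + ij.2) h

lemma apply_eq_zero_of_lt (A : LPDO K) {m n : ℕ} (h : ord A < m + n) : A (m, n) = 0 := by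
  by_contra hne
  have := le_ord (Finsupp.mem_support_iff.2 hne)
  simp only at this
  omega

lemma exists_leading (A : LPDO K) (hA : A ≠ 0) :
    ∃ i j : ℕ, (i, j) ∈ A.support ∧ i + j = ord A ∧
      ∀ ij : ℕ × ℕ, ij ∈ A.support → ij.1 + ij.2 = ord A → ij.1 ≤ i := by
  classical
  have hne : A.support.Nonempty := Finsupp.support_nonempty_iff.2 hA
  obtain ⟨b, hb, hbe⟩ := Finset.exists_mem_eq_sup A.support hne (fun ij => ij.1 + ij.2)
  set s : Finset (ℕ × ℕ) := A.support.filter (fun ij => ij.1 + ij.2 = ord A) with hs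
  have hsne : s.Nonempty := ⟨b, by simp [hs, hb, Finset.mem_filter]; exact hbe.symm⟩
  obtain ⟨x, hx, hxmax⟩ := Finset.exists_max_image s Prod.fst hsne
  rw [hs, Finset.mem_filter] at hx
  exact ⟨x.1, x.2, by simpa using hx.1, hx.2, fun ij hij hije =>
    hxmax ij (by rw [hs, Finset.mem_filter]; exact ⟨hij, hije⟩)⟩

lemma comp_zero_left (B : LPDO K) : comp dx dy (0 : LPDO K) B = 0 := by
  rw [LPDO.comp, Finsupp.sum_zero_index]

lemma sum_ite_point (L : LPDO K) (t : ℕ × ℕ) (h : K → K) (h0 : h 0 = 0) :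
    (L.sum fun kl b => if kl = t then h b else 0) = h (L t) := by
  classical
  rw [Finsupp.sum, Finset.sum_ite_eq' L.support t (fun kl => h (L kl))]
  by_cases ht : t ∈ L.support
  · rw [if_pos ht]
  · rw [if_neg ht, Finsupp.notMem_support_iff.mp ht, h0]

lemma lead_aux {A B : LPDO K} {i0 j0 k0 l0 : ℕ}
    (hAe : i0 + j0 = ord A)
    (hAmax : ∀ ij : ℕ × ℕ, ij ∈ A.support → ij.1 + ij.2 = ord A → ij.1 ≤ i0)
    (hBe : k0 + l0 = ord B)
    (hBmax : ∀ kl : ℕ × ℕ, kl ∈ B.support → kl.1 + kl.2 = ord B → kl.1 ≤ k0)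
    {ij kl : ℕ × ℕ} (hij : ij ∈ A.support) (hkl : kl ∈ B.support)
    {p q : ℕ} (hp : p ≤ ij.1) (hq : q ≤ ij.2)
    (he : ((p + kl.1 : ℕ), (q + kl.2 : ℕ)) = (i0 + k0, j0 + l0)) :
    p = ij.1 ∧ q = ij.2 ∧ ij = (i0, j0) ∧ kl = (k0, l0) := by
  have hA' : ij.1 + ij.2 ≤ ord A := le_ord hij
  have hB' : kl.1 + kl.2 ≤ ord B := le_ord hkl
  rw [Prod.mk.injEq] at he
  have hijA : ij.1 + ij.2 = ord A := by omega
  have hklB : kl.1 + kl.2 = ord B := by omega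
  have hi : ij.1 ≤ i0 := hAmax ij hij hijA
  have hk : kl.1 ≤ k0 := hBmax kl hkl hklB
  obtain ⟨i, j⟩ := ij
  obtain ⟨k, l⟩ := kl
  simp only [Prod.mk.injEq] at *
  omega

lemma comp_apply_leading (A B : LPDO K) {i0 j0 k0 l0 : ℕ}
    (hA : (i0, j0) ∈ A.support) (hAe : i0 + j0 = ord A)
    (hAmax : ∀ ij : ℕ × ℕ, ij ∈ A.support → ij.1 + ij.2 = ord A → ij.1 ≤ i0)
    (hB : (k0, l0) ∈ B.support) (hBe : k0 + l0 = ord B)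
    (hBmax : ∀ kl : ℕ × ℕ, kl ∈ B.support → kl.1 + kl.2 = ord B → kl.1 ≤ k0) :
    comp dx dy A B (i0 + k0, j0 + l0) = A (i0, j0) * B (k0, l0) := by
  rw [comp_apply, Finsupp.sum]
  refine (Finset.sum_eq_single_of_mem _ hA ?_).trans ?_
  · intro ij hij hne
    rw [Finsupp.sum]
    refine Finset.sum_eq_zero fun kl hkl => ?_
    refine Finset.sum_eq_zero fun p hp => ?_
    refine Finset.sum_eq_zero fun q hq => ?_
    rw [if_neg]
    intro he
    obtain ⟨-, -, hij0, -⟩ := lead_aux hAe hAmax hBe hBmax hij hkl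
      (Finset.mem_range_succ_iff.mp hp) (Finset.mem_range_succ_iff.mp hq) he
    exact hne hij0
  · rw [Finsupp.sum]
    refine (Finset.sum_eq_single_of_mem _ hB ?_).trans ?_
    · intro kl hkl hne
      refine Finset.sum_eq_zero fun p hp => ?_
      refine Finset.sum_eq_zero fun q hq => ?_
      rw [if_neg]
      intro he
      obtain ⟨-, -, -, hkl0⟩ := lead_aux hAe hAmax hBe hBmax hA hkl
        (Finset.mem_range_succ_iff.mp hp) (Finset.mem_range_succ_iff.mp hq) he
      exact hne hkl0
    · rw [Finset.sum_eq_single i0]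
      · rw [Finset.sum_eq_single j0]
        · rw [if_pos rfl]
          simp [Nat.sub_self]
        · intro q hq hqne
          rw [if_neg]
          intro he
          rw [Prod.mk.injEq] at he
          exact hqne (by omega)
        · intro h; exact absurd (Finset.self_mem_range_succ j0) h
      · intro p hp hpne
        refine Finset.sum_eq_zero fun q hq => ?_
        rw [if_neg]
        intro he
        rw [Prod.mk.injEq] at he
        exact hpne (by omega)
      · intro h; exact absurd (Finset.self_mem_range_succ i0) h

lemma sum_ite_point' (L : LPDO K) (m n : ℕ) (h : K → K) (h0 : h 0 = 0) :
    (L.sum fun kl b => if ((kl.1 : ℕ), (kl.2 : ℕ)) = (m, n) then h b else 0) = h (L (m, n)) := by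
  rw [← sum_ite_point L (m, n) h h0]

lemma sum_ite_shift1 (L : LPDO K) (m n : ℕ) (h : K → K) (h0 : h 0 = 0) :
    (L.sum fun kl b => if ((1 + kl.1 : ℕ), (kl.2 : ℕ)) = (m, n) then h b else 0)
      = if 1 ≤ m then h (L (m - 1, n)) else 0 := by
  cases m with
  | zero =>
    rw [if_neg (by omega), Finsupp.sum]
    refine Finset.sum_eq_zero fun kl _ => if_neg ?_
    intro he; rw [Prod.mk.injEq] at he; omega
  | succ m' =>
    rw [if_pos (by omega)]
    have step : (L.sum fun kl b => if ((1 + kl.1 : ℕ), (kl.2 : ℕ)) = (m' + 1, n) then h b else 0)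
        = L.sum fun kl b => if kl = (m', n) then h b else 0 :=
      Finsupp.sum_congr fun kl _ => if_congr
        (by obtain ⟨k, l⟩ := kl; simp only [Prod.mk.injEq]; omega) rfl rfl
    rw [step, sum_ite_point L (m', n) h h0, Nat.succ_sub_one]

lemma sum_ite_shift2 (L : LPDO K) (m n : ℕ) (h : K → K) (h0 : h 0 = 0) :
    (L.sum fun kl b => if ((kl.1 : ℕ), (1 + kl.2 : ℕ)) = (m, n) then h b else 0)
      = if 1 ≤ n then h (L (m, n - 1)) else 0 := by
  cases n with
  | zero =>
    rw [if_neg (by omega), Finsupp.sum]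
    refine Finset.sum_eq_zero fun kl _ => if_neg ?_
    intro he; rw [Prod.mk.injEq] at he; omega
  | succ n' =>
    rw [if_pos (by omega)]
    have step : (L.sum fun kl b => if ((kl.1 : ℕ), (1 + kl.2 : ℕ)) = (m, n' + 1) then h b else 0)
        = L.sum fun kl b => if kl = (m, n') then h b else 0 :=
      Finsupp.sum_congr fun kl _ => if_congr
        (by obtain ⟨k, l⟩ := kl; simp only [Prod.mk.injEq]; omega) rfl rfl
    rw [step, sum_ite_point L (m, n') h h0, Nat.succ_sub_one]

lemma comp_low (hdx : IsDeriv dx) (hdy : IsDeriv dy) (N L : LPDO K)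
    (hsupp : N.support ⊆ {((0 : ℕ), (0 : ℕ)), (1, 0), (0, 1)}) (m n : ℕ) :
    comp dx dy N L (m, n) =
      N (1, 0) * dx (L (m, n)) + N (0, 1) * dy (L (m, n)) + N (0, 0) * L (m, n)
      + (if 1 ≤ m then N (1, 0) * L (m - 1, n) else 0)
      + (if 1 ≤ n then N (0, 1) * L (m, n - 1) else 0) := by
  classical
  rw [comp_apply]
  rw [Finsupp.sum_of_support_subset N hsupp _ (by intro ij _; simp)]
  rw [show ({((0 : ℕ), (0 : ℕ)), (1, 0), (0, 1)} : Finset (ℕ × ℕ))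
      = insert ((0 : ℕ), (0 : ℕ)) (insert ((1 : ℕ), (0 : ℕ)) {((0 : ℕ), (1 : ℕ))}) from rfl]
  rw [Finset.sum_insert (by decide), Finset.sum_insert (by decide), Finset.sum_singleton]
  simp only [Finset.sum_range_succ, Finset.sum_range_one, Nat.choose_self, Nat.choose_zero_right,
    Nat.cast_one, Nat.sub_self, Nat.sub_zero, Function.iterate_one, Function.iterate_zero, id_eq,
    mul_one, one_mul, zero_add]
  simp only [Finset.sum_range_zero, zero_add]
  rw [Finsupp.sum_add, Finsupp.sum_add,
      sum_ite_point' L m n (fun b => N (0, 0) * b) (mul_zero _),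
      sum_ite_point' L m n (fun b => N (1, 0) * dx b) (by simp [deriv_zero hdx]),
      sum_ite_shift1 L m n (fun b => N (1, 0) * b) (mul_zero _),
      sum_ite_point' L m n (fun b => N (0, 1) * dy b) (by simp [deriv_zero hdy]),
      sum_ite_shift2 L m n (fun b => N (0, 1) * b) (mul_zero _)]
  ring

lemma comp_Dy_apply (hdx : IsDeriv dx) (hdy : IsDeriv dy) (A : LPDO K) (m n : ℕ) :
    comp dx dy A LPDO.Dy (m, n) = if 1 ≤ n then A (m, n - 1) else 0 := by
  classical
  rw [comp_apply]
  have step1 : ∀ ij : ℕ × ℕ, ∀ a : K,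
      ((LPDO.Dy : LPDO K).sum fun kl b =>
        ∑ p ∈ Finset.range (ij.1 + 1), ∑ q ∈ Finset.range (ij.2 + 1),
          (if ((p + kl.1 : ℕ), (q + kl.2 : ℕ)) = (m, n)
           then a * (ij.1.choose p : K) * (ij.2.choose q : K) * dx^[ij.1 - p] (dy^[ij.2 - q] b)
           else 0))
      = if ((ij.1 : ℕ), (1 + ij.2 : ℕ)) = (m, n) then a else 0 := by
    intro ij a
    rw [LPDO.Dy, Finsupp.sum_single_index]
    · rw [Finset.sum_eq_single ij.1]
      · rw [Finset.sum_eq_single ij.2]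
        · rw [Nat.sub_self, Nat.sub_self]
          simp only [Function.iterate_zero, id_eq, Nat.choose_self, Nat.cast_one, mul_one,
            add_zero, add_comm ij.2 1]
        · intro q hq hqne
          have h1 : dy^[ij.2 - q] (1 : K) = 0 :=
            iter_one hdy (by rw [Finset.mem_range] at hq; omega)
          rw [Nat.sub_self, h1]
          simp only [Function.iterate_zero, id_eq, mul_zero, ite_self]
        · intro h; exact absurd (Finset.self_mem_range_succ ij.2) h
      · intro p hp hpne
        refine Finset.sum_eq_zero fun q hq => ?_
        have h1 : dx^[ij.1 - p] (dy^[ij.2 - q] (1 : K)) = 0 := by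
          rcases eq_or_ne q ij.2 with rfl | hq'
          · rw [Nat.sub_self]
            exact iter_one hdx (by rw [Finset.mem_range] at hp; omega)
          · rw [iter_one hdy (by rw [Finset.mem_range] at hq; omega), iter_zero hdx]
        rw [h1]
        simp only [mul_zero, ite_self]
      · intro h; exact absurd (Finset.self_mem_range_succ ij.1) h
    · refine Finset.sum_eq_zero fun p _ => Finset.sum_eq_zero fun q _ => ?_
      rw [iter_zero hdy, iter_zero hdx]
      simp only [mul_zero, ite_self]
  rw [Finsupp.sum_congr (g2 := fun ij a => if ((ij.1 : ℕ), (1 + ij.2 : ℕ)) = (m, n) then a else 0)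
    fun ij _ => step1 ij (A ij)]
  exact sum_ite_shift2 A m n id rfl

lemma psym_coeff (A : LPDO K) (d i : ℕ) (hi : i ≤ d) :
    MvPolynomial.coeff (Finsupp.single (0 : Fin 2) i + Finsupp.single (1 : Fin 2) (d - i))
      (psym A d) = A (i, d - i) := by
  classical
  rw [LPDO.psym, MvPolynomial.coeff_sum, Finset.sum_eq_single i]
  · rw [MvPolynomial.coeff_monomial, if_pos rfl]
  · intro i' _ hne
    rw [MvPolynomial.coeff_monomial, if_neg]
    intro he
    have h0 := congrArg (fun s : Fin 2 →₀ ℕ => s 0) he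
    simp only [Finsupp.add_apply, Finsupp.single_apply] at h0
    norm_num at h0
    exact hne h0
  · intro h; exact absurd (Finset.mem_range.2 (by omega)) h

lemma top_coeff_eq {L1 L : LPDO K} {d : ℕ} (h : psym L1 d = psym L d) :
    ∀ i j : ℕ, i + j = d → L1 (i, j) = L (i, j) := by
  intro i j hij
  have hi : i ≤ d := by omega
  have := congrArg (MvPolynomial.coeff
    (Finsupp.single (0 : Fin 2) i + Finsupp.single (1 : Fin 2) (d - i))) h
  rw [psym_coeff L1 d i hi, psym_coeff L d i hi] at this
  have hj : d - i = j := by omega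
  rwa [hj] at this

lemma psym_congr {L1 L : LPDO K} {d : ℕ} (h : ∀ i j : ℕ, i + j = d → L1 (i, j) = L (i, j)) :
    psym L1 d = psym L d := by
  refine Finset.sum_congr rfl fun i hi => ?_
  rw [Finset.mem_range] at hi
  rw [h i (d - i) (by omega)]

end LPDOAux

open LPDOAux

/-- `L` of order `d` admits a Darboux transformation generated by
`Dy` iff all nonzero coefficients `a_{i0}`, `a_{k0}` satisfy `a_{i0} = F·a_{k0}`
for some `∂y`-constant `F`. -/
theorem statement8 {K : Type*} [Field K] [CharZero K]
    (dx dy : K → K) (hdx : IsDeriv dx) (hdy : IsDeriv dy)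
    (hcomm : ∀ a : K, dx (dy a) = dy (dx a))
    (L : LPDO K) (hLne : L ≠ 0) (d : ℕ) (hd : LPDO.ord L = d) :
    LPDO.AdmitsDarboux dx dy L LPDO.Dy ↔
      ∀ i k : ℕ, i ≤ d → k ≤ d → L (i, 0) ≠ 0 → L (k, 0) ≠ 0 →
        ∃ F : K, dy F = 0 ∧ L (i, 0) = F * L (k, 0) := by
  constructor
  · rintro ⟨N, L1, ⟨hordL1, hpsym⟩, hcompeq⟩
    rw [hd] at hordL1 hpsym
    have htop : ∀ i j : ℕ, i + j = d → L1 (i, j) = L (i, j) := top_coeff_eq hpsym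
    obtain ⟨k0, l0, hkmem, hke, hkmax⟩ := exists_leading L hLne
    rw [hd] at hke
    have hLk : L (k0, l0) ≠ 0 := Finsupp.mem_support_iff.1 hkmem
    have hR : ∀ m n : ℕ, LPDO.comp dx dy N L (m, n) = if 1 ≤ n then L1 (m, n - 1) else 0 :=
      fun m n => by rw [hcompeq, comp_Dy_apply hdx hdy]
    have hNne : N ≠ 0 := by
      intro h0
      have h1 := hR k0 (l0 + 1)
      rw [h0, comp_zero_left, if_pos (by omega), Nat.add_sub_cancel, htop k0 l0 hke,
        Finsupp.coe_zero, Pi.zero_apply] at h1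
      exact hLk h1.symm
    obtain ⟨i0, j0, himem, hie, himax⟩ := exists_leading N hNne
    have hlead := comp_apply_leading (dx := dx) (dy := dy) N L himem hie himax hkmem
      (by rw [hd]; exact hke) (fun kl hkl hkle => hkmax kl hkl hkle)
    have hNL : N (i0, j0) * L (k0, l0) ≠ 0 :=
      mul_ne_zero (Finsupp.mem_support_iff.1 himem) hLk
    have hordN : i0 + j0 ≤ 1 := by
      by_contra hgt
      push_neg at hgt
      have h1 := hR (i0 + k0) (j0 + l0)
      rw [hlead] at h1
      rcases Nat.eq_zero_or_pos (j0 + l0) with hz | hpos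
      · rw [if_neg (by omega)] at h1
        exact hNL h1
      · rw [if_pos (by omega)] at h1
        rw [apply_eq_zero_of_lt L1 (by rw [hordL1]; omega)] at h1
        exact hNL h1
    have hsuppN : N.support ⊆ {((0 : ℕ), (0 : ℕ)), (1, 0), (0, 1)} := by
      intro ij hij
      have h1 : ij.1 + ij.2 ≤ LPDO.ord N := le_ord hij
      obtain ⟨i, j⟩ := ij
      simp only [Finset.mem_insert, Finset.mem_singleton, Prod.mk.injEq]
      omega
    have hcl := comp_low hdx hdy N L hsuppN
    have hLtop1 : ∀ i j : ℕ, i + j = d + 1 → L (i, j) = 0 := fun i j h =>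
      apply_eq_zero_of_lt L (by omega)
    have hmax0 : ∀ i j : ℕ, i + j = d → k0 < i → L (i, j) = 0 := by
      intro i j hij hk
      by_contra h
      have := hkmax (i, j) (Finsupp.mem_support_iff.2 h) (by rw [hd]; exact hij)
      simp only at this
      omega
    -- α = 0
    have hα : N (1, 0) = 0 := by
      have h1 := hcl (k0 + 1) l0
      rw [hR] at h1
      rw [hLtop1 (k0 + 1) l0 (by omega), deriv_zero hdx, deriv_zero hdy,
        if_pos (by omega : 1 ≤ k0 + 1), Nat.add_sub_cancel] at h1
      rcases Nat.eq_zero_or_pos l0 with hz | hpos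
      · subst hz
        rw [if_neg (by omega), if_neg (by omega)] at h1
        have h2 : N (1, 0) * L (k0, 0) = 0 := by linear_combination -h1
        exact (mul_eq_zero.mp h2).resolve_right hLk
      · rw [if_pos (by omega : 1 ≤ l0), if_pos (by omega : 1 ≤ l0)] at h1
        rw [htop (k0 + 1) (l0 - 1) (by omega), hmax0 (k0 + 1) (l0 - 1) (by omega) (by omega)] at h1
        have h2 : N (1, 0) * L (k0, l0) = 0 := by linear_combination -h1
        exact (mul_eq_zero.mp h2).resolve_right hLk
    -- β = 1
    have hβ : N (0, 1) = 1 := by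
      have h1 := hcl k0 (l0 + 1)
      rw [hR] at h1
      rw [hLtop1 k0 (l0 + 1) (by omega), deriv_zero hdx, deriv_zero hdy,
        if_pos (by omega : 1 ≤ l0 + 1), if_pos (by omega : 1 ≤ l0 + 1),
        Nat.add_sub_cancel, htop k0 l0 hke, hα] at h1
      rcases Nat.eq_zero_or_pos k0 with hz | hpos
      · subst hz
        rw [if_neg (by omega)] at h1
        have h2 : (N (0, 1) - 1) * L (0, l0) = 0 := by linear_combination -h1
        have := (mul_eq_zero.mp h2).resolve_right hLk
        linear_combination this
      · rw [if_pos (by omega : 1 ≤ k0)] at h1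
        have h2 : (N (0, 1) - 1) * L (k0, l0) = 0 := by linear_combination -h1
        have := (mul_eq_zero.mp h2).resolve_right hLk
        linear_combination this
    -- key identity
    have hkey : ∀ m : ℕ, dy (L (m, 0)) + N (0, 0) * L (m, 0) = 0 := by
      intro m
      have h1 := hcl m 0
      rw [hR, hα, hβ, if_neg (by omega : ¬ 1 ≤ 0), if_neg (by omega : ¬ 1 ≤ 0)] at h1
      rcases Nat.eq_zero_or_pos m with hz | hpos
      · subst hz
        rw [if_neg (by omega)] at h1
        linear_combination -h1
      · rw [if_pos (by omega : 1 ≤ m)] at h1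
        linear_combination -h1
    -- conclude
    intro i k hi hk hLi hLk'
    refine ⟨L (i, 0) * (L (k, 0))⁻¹, ?_, ?_⟩
    · have e1 : dy (L (i, 0)) = -(N (0, 0) * L (i, 0)) := by linear_combination hkey i
      have e2 : dy (L (k, 0)) = -(N (0, 0) * L (k, 0)) := by linear_combination hkey k
      have e3 : dy ((L (k, 0))⁻¹) = N (0, 0) * (L (k, 0))⁻¹ := by
        have h4 := hdy.2 (L (k, 0)) ((L (k, 0))⁻¹)
        rw [mul_inv_cancel₀ hLk', deriv_one hdy, e2] at h4
        -- 0 = -(c * ak) * ak⁻¹ + ak * dy ak⁻¹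
        have h5 : L (k, 0) * dy ((L (k, 0))⁻¹) = N (0, 0) * (L (k, 0) * (L (k, 0))⁻¹) := by
          linear_combination -h4
        rw [mul_inv_cancel₀ hLk', mul_one] at h5
        field_simp at h5 ⊢
        linear_combination h5
      rw [hdy.2, e1, e3]
      ring
    · rw [mul_assoc, inv_mul_cancel₀ hLk', mul_one]
  · intro hcond
    classical
    obtain ⟨c, hc⟩ : ∃ c : K, ∀ m : ℕ, dy (L (m, 0)) + c * L (m, 0) = 0 := by
      by_cases hex : ∃ m : ℕ, L (m, 0) ≠ 0
      · obtain ⟨m0, hm0⟩ := hex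
        refine ⟨-(dy (L (m0, 0)) * (L (m0, 0))⁻¹), fun m => ?_⟩
        by_cases hm : L (m, 0) = 0
        · rw [hm, deriv_zero hdy]; ring
        · have him : m ≤ d := by
            have := le_ord (Finsupp.mem_support_iff.2 hm)
            simp only at this
            omega
          have him0 : m0 ≤ d := by
            have := le_ord (Finsupp.mem_support_iff.2 hm0)
            simp only at this
            omega
          obtain ⟨F, hF, hFe⟩ := hcond m m0 him him0 hm hm0
          rw [hFe, hdy.2, hF]
          field_simp
          ring
      · push_neg at hex
        exact ⟨0, fun m => by rw [hex m, deriv_zero hdy]; ring⟩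
    set N : LPDO K := Finsupp.single ((0 : ℕ), (1 : ℕ)) 1 + Finsupp.single ((0 : ℕ), (0 : ℕ)) c
      with hNdef
    have hN10 : N (1, 0) = 0 := by
      rw [hNdef, Finsupp.add_apply, Finsupp.single_apply, Finsupp.single_apply]
      simp [Prod.ext_iff]
    have hN01 : N (0, 1) = 1 := by
      rw [hNdef, Finsupp.add_apply, Finsupp.single_apply, Finsupp.single_apply]
      simp [Prod.ext_iff]
    have hN00 : N (0, 0) = c := by
      rw [hNdef, Finsupp.add_apply, Finsupp.single_apply, Finsupp.single_apply]
      simp [Prod.ext_iff]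
    have hsuppN : N.support ⊆ {((0 : ℕ), (0 : ℕ)), (1, 0), (0, 1)} := by
      intro ij hij
      have h1 := Finsupp.support_add hij
      rw [Finset.mem_union] at h1
      rcases h1 with h | h
      · have := Finset.mem_singleton.mp (Finsupp.support_single_subset h)
        subst this
        simp
      · have := Finset.mem_singleton.mp (Finsupp.support_single_subset h)
        subst this
        simp
    have hcl := comp_low hdx hdy N L hsuppN
    have hR0 : ∀ m : ℕ, LPDO.comp dx dy N L (m, 0) = 0 := by
      intro m
      rw [hcl m 0, hN10, hN01, hN00, if_neg (by omega : ¬ 1 ≤ 0)]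
      rcases Nat.eq_zero_or_pos m with hz | hpos
      · subst hz
        rw [if_neg (by omega)]
        linear_combination hc 0
      · rw [if_pos (by omega : 1 ≤ m)]
        linear_combination hc m
    have hinj : Set.InjOn (fun ij : ℕ × ℕ => (ij.1, ij.2 + 1))
        ((fun ij : ℕ × ℕ => (ij.1, ij.2 + 1)) ⁻¹' ↑(LPDO.comp dx dy N L).support) := by
      intro a _ b _ hab
      obtain ⟨a1, a2⟩ := a
      obtain ⟨b1, b2⟩ := b
      simp only [Prod.mk.injEq] at hab ⊢
      omega
    set L1 : LPDO K := Finsupp.comapDomain (fun ij : ℕ × ℕ => (ij.1, ij.2 + 1))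
      (LPDO.comp dx dy N L) hinj with hL1def
    have hL1app : ∀ i j : ℕ, L1 (i, j) = LPDO.comp dx dy N L (i, j + 1) := fun i j =>
      Finsupp.comapDomain_apply _ _ _ _
    have hL1coeff : ∀ i j : ℕ, L1 (i, j) = dy (L (i, j + 1)) + c * L (i, j + 1) + L (i, j) := by
      intro i j
      rw [hL1app, hcl i (j + 1), hN10, hN01, hN00, if_pos (by omega : 1 ≤ j + 1),
        Nat.add_sub_cancel]
      rcases Nat.eq_zero_or_pos i with hz | hpos
      · subst hz
        rw [if_neg (by omega)]
        ring
      · rw [if_pos (by omega : 1 ≤ i)]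
        ring
    have hcompeq : LPDO.comp dx dy N L = LPDO.comp dx dy L1 LPDO.Dy := by
      ext ij
      obtain ⟨m, n⟩ := ij
      rw [comp_Dy_apply hdx hdy]
      cases n with
      | zero => rw [if_neg (by omega)]; exact hR0 m
      | succ n' =>
        rw [if_pos (by omega), Nat.add_sub_cancel, hL1app]
    have hL1top : ∀ i j : ℕ, i + j = d → L1 (i, j) = L (i, j) := by
      intro i j hij
      rw [hL1coeff, apply_eq_zero_of_lt L (show LPDO.ord L < i + (j + 1) by omega),
        deriv_zero hdy]
      ring
    have hL1hi : ∀ i j : ℕ, d < i + j → L1 (i, j) = 0 := by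
      intro i j hij
      rw [hL1coeff, apply_eq_zero_of_lt L (show LPDO.ord L < i + (j + 1) by omega),
        apply_eq_zero_of_lt L (show LPDO.ord L < i + j by omega), deriv_zero hdy]
      ring
    have hordL1 : LPDO.ord L1 = d := by
      apply le_antisymm
      · rw [LPDO.ord]
        apply Finset.sup_le
        intro ij hij
        obtain ⟨i, j⟩ := ij
        by_contra h
        push_neg at h
        exact (Finsupp.mem_support_iff.1 hij) (hL1hi i j (by simpa using h))
      · obtain ⟨k0, l0, hkm, hke, -⟩ := exists_leading L hLne
        rw [hd] at hke
        have h1 : L1 (k0, l0) ≠ 0 := by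
          rw [hL1top k0 l0 hke]
          exact Finsupp.mem_support_iff.1 hkm
        have := le_ord (Finsupp.mem_support_iff.2 h1)
        simp only at this
        omega
    refine ⟨N, L1, ⟨?_, ?_⟩, hcompeq⟩
    · rw [hordL1, hd]
    · rw [hd, psym_congr hL1top]
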